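/- If T is a normal adjointable operator on a Hilbert C*-module H (i.e., T*T = TT*), then the numerical radius equals the norm: w(T) = ‖T‖. -/

import Mathlib

open scoped ComplexOrder RightActions

noncomputable section

set_option linter.unusedSectionVars false
set_option linter.unusedVariables false
set_option maxHeartbeats 1000000

variable {A : Type*} [NonUnitalCStarAlgebra A] [PartialOrder A] [StarOrderedRing A]
variable {H : Type*} [NormedAddCommGroup H] [NormedSpace ℂ H] [SMul A H] [CStarModule A H]

/-- A state on the C*-algebra `A`: a norm-one functional that is positive. -/
def IsState (ρ : A →L[ℂ] ℂ) : Prop :=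
  ‖ρ‖ = 1 ∧ ∀ a : A, 0 ≤ ρ (star a * a)

/-- The spatial numerical radius `w̃(T)`. -/
def spatialNumRadius (A : Type*) {H : Type*} [NonUnitalCStarAlgebra A] [PartialOrder A]
    [StarOrderedRing A] [NormedAddCommGroup H] [NormedSpace ℂ H] [SMul A H] [CStarModule A H]
    (T : H →L[ℂ] H) : ℝ :=
  sSup {r : ℝ | ∃ (x : H) (ρ : A →L[ℂ] ℂ), IsState ρ ∧ ρ (inner A x x : A) = 1 ∧
    r = ‖ρ (inner A x (T x) : A)‖}

/-- The numerical radius `w(T)` of a Hilbert C*-module operator. -/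
def numRadius (A : Type*) {H : Type*} [NonUnitalCStarAlgebra A] [PartialOrder A]
    [StarOrderedRing A] [NormedAddCommGroup H] [NormedSpace ℂ H] [SMul A H] [CStarModule A H]
    (T : H →L[ℂ] H) : ℝ :=
  sSup {r : ℝ | ∃ x : H, ‖x‖ = 1 ∧ r = ‖(inner A (T x) x : A)‖}

namespace NumRadAux


lemma norm_adj_apply_le (T Tadj : H →L[ℂ] H)
    (hT : ∀ x y : H, (inner A (T x) y : A) = inner A x (Tadj y)) (y : H) :
    ‖Tadj y‖ ≤ ‖T‖ * ‖y‖ := by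
  have h1 : ‖Tadj y‖ ^ 2 = ‖(inner A (T (Tadj y)) y : A)‖ := by
    rw [hT]; exact CStarModule.norm_sq_eq A
  have h2 : ‖(inner A (T (Tadj y)) y : A)‖ ≤ ‖T (Tadj y)‖ * ‖y‖ := CStarModule.norm_inner_le H
  have h3 : ‖T (Tadj y)‖ ≤ ‖T‖ * ‖Tadj y‖ := T.le_opNorm _
  rcases eq_or_lt_of_le (norm_nonneg (Tadj y)) with h | h
  · rw [← h]; positivity
  · nlinarith [norm_nonneg y, norm_nonneg (T (Tadj y))]

lemma norm_sq_le_comp (T Tadj : H →L[ℂ] H)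
    (hT : ∀ x y : H, (inner A (T x) y : A) = inner A x (Tadj y)) :
    ‖T‖ ^ 2 ≤ ‖Tadj ∘L T‖ := by
  set c := ‖Tadj ∘L T‖ with hc
  have hc0 : 0 ≤ c := norm_nonneg _
  have hb : ∀ x : H, ‖T x‖ ≤ Real.sqrt c * ‖x‖ := by
    intro x
    have h1 : ‖T x‖ ^ 2 = ‖(inner A (T x) (T x) : A)‖ := CStarModule.norm_sq_eq A
    have h2 : (inner A (T x) (T x) : A) = inner A x (Tadj (T x)) := hT x (T x)
    have h3 : ‖(inner A x (Tadj (T x)) : A)‖ ≤ ‖x‖ * ‖Tadj (T x)‖ := CStarModule.norm_inner_le H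
    have h4 : ‖Tadj (T x)‖ ≤ c * ‖x‖ := (Tadj ∘L T).le_opNorm x
    have h5 : ‖T x‖ ^ 2 ≤ c * ‖x‖ ^ 2 := by rw [h1, h2]; nlinarith [norm_nonneg x]
    calc ‖T x‖ = Real.sqrt (‖T x‖ ^ 2) := by
          rw [Real.sqrt_sq (norm_nonneg _)]
      _ ≤ Real.sqrt (c * ‖x‖ ^ 2) := Real.sqrt_le_sqrt h5
      _ = Real.sqrt c * ‖x‖ := by
          rw [Real.sqrt_mul hc0, Real.sqrt_sq (norm_nonneg _)]
  have h6 : ‖T‖ ≤ Real.sqrt c := T.opNorm_le_bound (Real.sqrt_nonneg _) hb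
  calc ‖T‖ ^ 2 ≤ Real.sqrt c ^ 2 := by
        have := norm_nonneg T; nlinarith
    _ = c := Real.sq_sqrt hc0

lemma norm_comp_adj (T Tadj : H →L[ℂ] H)
    (hT : ∀ x y : H, (inner A (T x) y : A) = inner A x (Tadj y)) :
    ‖Tadj ∘L T‖ = ‖T‖ ^ 2 := by
  refine le_antisymm ?_ (norm_sq_le_comp T Tadj hT)
  have h1 : ‖Tadj‖ ≤ ‖T‖ := Tadj.opNorm_le_bound (norm_nonneg T) (norm_adj_apply_le T Tadj hT)
  calc ‖Tadj ∘L T‖ ≤ ‖Tadj‖ * ‖T‖ := ContinuousLinearMap.opNorm_comp_le _ _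
    _ ≤ ‖T‖ * ‖T‖ := by nlinarith [norm_nonneg T]
    _ = ‖T‖ ^ 2 := (sq ‖T‖).symm

lemma norm_sq_of_normal (T Tadj : H →L[ℂ] H)
    (hT : ∀ x y : H, (inner A (T x) y : A) = inner A x (Tadj y))
    (hnormal : Tadj ∘L T = T ∘L Tadj) :
    ‖T ∘L T‖ = ‖T‖ ^ 2 := by
  have hP : ∀ x y : H, (inner A ((Tadj ∘L T) x) y : A) = inner A x ((Tadj ∘L T) y) := by
    intro x y
    simp only [ContinuousLinearMap.comp_apply]
    calc (inner A (Tadj (T x)) y : A)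
        = star (inner A y (Tadj (T x)) : A) := (CStarModule.star_inner y (Tadj (T x))).symm
      _ = star (inner A (T y) (T x) : A) := by rw [hT y (T x)]
      _ = inner A (T x) (T y) := CStarModule.star_inner (T y) (T x)
      _ = inner A x (Tadj (T y)) := hT x (T y)
  have hTT : ∀ x y : H, (inner A ((T ∘L T) x) y : A) = inner A x ((Tadj ∘L Tadj) y) := by
    intro x y
    simp only [ContinuousLinearMap.comp_apply, hT]
  have key : (Tadj ∘L Tadj) ∘L (T ∘L T) = (Tadj ∘L T) ∘L (Tadj ∘L T) := by
    ext x
    simp only [ContinuousLinearMap.comp_apply]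
    rw [← ContinuousLinearMap.comp_apply Tadj T, hnormal]
    simp [ContinuousLinearMap.comp_apply]
  have e1 : ‖T ∘L T‖ ^ 2 = ‖(Tadj ∘L Tadj) ∘L (T ∘L T)‖ :=
    (norm_comp_adj (T ∘L T) (Tadj ∘L Tadj) hTT).symm
  have e2 : ‖(Tadj ∘L T) ∘L (Tadj ∘L T)‖ = ‖Tadj ∘L T‖ ^ 2 :=
    norm_comp_adj (Tadj ∘L T) (Tadj ∘L T) hP
  have e3 : ‖Tadj ∘L T‖ = ‖T‖ ^ 2 := norm_comp_adj T Tadj hT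
  have e4 : ‖T ∘L T‖ ^ 2 = (‖T‖ ^ 2) ^ 2 := by rw [e1, key, e2, e3]
  have h0 : (0:ℝ) ≤ ‖T‖ ^ 2 := sq_nonneg _
  nlinarith [norm_nonneg (T ∘L T), sq_nonneg (‖T ∘L T‖ - ‖T‖ ^ 2), sq_nonneg (‖T ∘L T‖ + ‖T‖ ^ 2)]

lemma adj_pow (T Tadj : H →L[ℂ] H)
    (hT : ∀ x y : H, (inner A (T x) y : A) = inner A x (Tadj y)) :
    ∀ n : ℕ, ∀ x y : H, (inner A ((T ^ n) x) y : A) = inner A x ((Tadj ^ n) y) := by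
  intro n
  induction n with
  | zero => intro x y; simp
  | succ n ih =>
    intro x y
    rw [pow_succ T n, pow_succ' Tadj n]
    simp only [ContinuousLinearMap.mul_apply]
    rw [ih (T x) y, ← hT]

lemma norm_pow_two_pow (T Tadj : H →L[ℂ] H)
    (hT : ∀ x y : H, (inner A (T x) y : A) = inner A x (Tadj y))
    (hnormal : Tadj ∘L T = T ∘L Tadj) :
    ∀ k : ℕ, ‖T ^ (2 ^ k)‖ = ‖T‖ ^ (2 ^ k) := by
  have hcomm : Commute Tadj T := hnormal
  intro k
  induction k with
  | zero => simp
  | succ k ih =>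
    have hsplit : T ^ (2 ^ (k + 1)) = (T ^ (2 ^ k)) ∘L (T ^ (2 ^ k)) := by
      rw [← ContinuousLinearMap.mul_def, ← pow_add, pow_succ, mul_two]
    have hnormS : (Tadj ^ (2 ^ k)) ∘L (T ^ (2 ^ k)) = (T ^ (2 ^ k)) ∘L (Tadj ^ (2 ^ k)) := by
      rw [← ContinuousLinearMap.mul_def, ← ContinuousLinearMap.mul_def]
      exact hcomm.pow_pow _ _
    rw [hsplit, norm_sq_of_normal (T ^ (2 ^ k)) (Tadj ^ (2 ^ k)) (adj_pow T Tadj hT _) hnormS,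
      ih, ← pow_mul, pow_succ, mul_comm (2 ^ k) 2, mul_comm 2 (2^k)]


section CompletionAux
open UniformSpace Filter
open scoped NNReal ENNReal


lemma exists_approx_eigenvector (T : H →L[ℂ] H)
    (hpow : ∀ k : ℕ, ‖T ^ (2 ^ k)‖ = ‖T‖ ^ (2 ^ k)) (hT0 : 0 < ‖T‖)
    {ε : ℝ} (hε : 0 < ε) :
    ∃ (lam : ℂ) (x : H), ‖x‖ = 1 ∧ ‖lam‖ = ‖T‖ ∧ ‖T x - lam • x‖ ≤ ε := by
  classical
  set ι : H →L[ℂ] Completion H := Completion.toComplL with hιdef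
  have hιc : ∀ x : H, ι x = (x : Completion H) := fun x => congrFun Completion.coe_toComplL x
  have hιnorm : ∀ x : H, ‖ι x‖ = ‖x‖ := fun x => by rw [hιc]; exact Completion.norm_coe x
  have hdense : DenseRange ⇑ι := by
    rw [hιdef, Completion.coe_toComplL]; exact Completion.denseRange_coe
  have hui : IsUniformInducing ⇑ι := by
    rw [hιdef, Completion.coe_toComplL]; exact Completion.coe_isometry.isUniformInducing
  set a : Completion H →L[ℂ] Completion H := (ι.comp T).extend ι with hadef
  have ha : ∀ x : H, a (ι x) = ι (T x) := fun x => ContinuousLinearMap.extend_eq _ hdense hui x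
  -- norm transfer
  have hnorm : ∀ (S : H →L[ℂ] H) (b : Completion H →L[ℂ] Completion H),
      (∀ x, b (ι x) = ι (S x)) → ‖b‖ = ‖S‖ := by
    intro S b hb
    refine le_antisymm (b.opNorm_le_bound (norm_nonneg S) ?_)
      (S.opNorm_le_bound (norm_nonneg b) fun x => ?_)
    · intro xh
      refine Completion.induction_on xh ?_ fun x => ?_
      · exact isClosed_le (continuous_norm.comp b.continuous)
          (continuous_const.mul continuous_norm)
      · rw [← hιc x, hb, hιnorm, hιnorm]
        exact S.le_opNorm x
    · rw [← hιnorm, ← hb, ← hιnorm x]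
      exact b.le_opNorm (ι x)
  have hb_pow : ∀ n : ℕ, ∀ x : H, (a ^ n) (ι x) = ι ((T ^ n) x) := by
    intro n
    induction n with
    | zero => intro x; simp
    | succ n ih =>
      intro x
      rw [pow_succ' a n, pow_succ' T n]
      simp only [ContinuousLinearMap.mul_apply]
      rw [ih x, ha]
  have hna : ‖a‖ = ‖T‖ := hnorm T a ha
  have hnapow : ∀ n : ℕ, ‖a ^ n‖ = ‖T ^ n‖ := fun n => hnorm _ _ (hb_pow n)
  -- nontriviality
  obtain ⟨x₀, hx₀⟩ : ∃ x : H, x ≠ 0 := by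
    by_contra h
    push_neg at h
    have : T = 0 := by ext x; rw [h x]; simp
    rw [this, norm_zero] at hT0; exact lt_irrefl _ hT0
  haveI : Nontrivial (Completion H) := by
    refine nontrivial_of_ne (x₀ : Completion H) 0 fun h => hx₀ ?_
    have := congrArg norm h
    rw [Completion.norm_coe, norm_zero] at this
    exact norm_eq_zero.mp this
  haveI : Nontrivial (Completion H →L[ℂ] Completion H) := by
    refine nontrivial_of_ne 1 0 fun h => ?_
    obtain ⟨u, v, huv⟩ := exists_pair_ne (Completion H)
    apply huv
    have hu : (1 : Completion H →L[ℂ] Completion H) u = 0 := by rw [h]; simp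
    have hv : (1 : Completion H →L[ℂ] Completion H) v = 0 := by rw [h]; simp
    simp only [ContinuousLinearMap.one_apply] at hu hv
    rw [hu, hv]
  -- spectral radius computation
  have hr : spectralRadius ℂ a = ENNReal.ofReal ‖T‖ := by
    have h2 : Tendsto (fun k : ℕ => (2:ℕ) ^ k) atTop atTop :=
      tendsto_pow_atTop_atTop_of_one_lt one_lt_two
    have h3 := (spectrum.pow_norm_pow_one_div_tendsto_nhds_spectralRadius a).comp h2
    have h4 : ((fun n : ℕ => ENNReal.ofReal (‖a ^ n‖ ^ (1 / n : ℝ))) ∘ fun k : ℕ => (2:ℕ) ^ k)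
        = fun _ => ENNReal.ofReal ‖T‖ := by
      funext k
      simp only [Function.comp_apply]
      rw [hnapow, hpow]
      congr 1
      have hm : (((2:ℕ) ^ k : ℕ) : ℝ) ≠ 0 := by positivity
      rw [← Real.rpow_natCast ‖T‖ (2 ^ k), ← Real.rpow_mul (norm_nonneg T), mul_one_div,
        div_self hm, Real.rpow_one]
    rw [h4] at h3
    exact tendsto_nhds_unique h3 tendsto_const_nhds
  obtain ⟨lam, hmem, hlam⟩ := spectrum.exists_nnnorm_eq_spectralRadius a
  have hlamnorm : ‖lam‖ = ‖T‖ := by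
    rw [hr, ← ENNReal.ofReal_coe_nnreal, coe_nnnorm,
      ENNReal.ofReal_eq_ofReal_iff (norm_nonneg lam) (norm_nonneg T)] at hlam
    exact hlam
  -- the approximate eigenvector construction
  set c := ‖T‖ with hcdef
  set δ : ℝ := min (ε / (10 * c)) (1 / 2) with hδdef
  have hδ0 : 0 < δ := lt_min (by positivity) one_half_pos
  have hδhalf : δ ≤ 1 / 2 := min_le_right _ _
  have hδle : δ ≤ ε / (10 * c) := min_le_left _ _
  have hδε : 10 * δ * c ≤ ε := by
    have h10 : (0:ℝ) < 10 * c := by positivity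
    calc 10 * δ * c ≤ 10 * (ε / (10 * c)) * c := by nlinarith
      _ = ε := by field_simp
  set μ : ℂ := ((1 + δ : ℝ) : ℂ) * lam with hμdef
  have hμnorm : ‖μ‖ = (1 + δ) * c := by
    rw [hμdef, norm_mul, hlamnorm, Complex.norm_real, Real.norm_eq_abs,
      abs_of_pos (by linarith)]
  have hμ : μ ∉ spectrum ℂ a := by
    intro hmem'
    have h6 := spectrum.norm_le_norm_of_mem hmem'
    rw [hμnorm, hna] at h6
    nlinarith
  obtain ⟨u, hu⟩ := spectrum.notMem_iff.mp hμ
  have hinv_pos : 0 < ‖(↑u⁻¹ : Completion H →L[ℂ] Completion H)‖ := by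
    rw [norm_pos_iff]
    intro h0
    have h1 := u.inv_mul
    rw [h0, zero_mul] at h1
    exact zero_ne_one h1
  have hlow : ‖(↑u⁻¹ : Completion H →L[ℂ] Completion H)‖⁻¹ ≤ δ * c := by
    by_contra h'
    push_neg at h'
    have hnear : ‖(algebraMap ℂ (Completion H →L[ℂ] Completion H) lam - a) - ↑u‖
        < ‖(↑u⁻¹ : Completion H →L[ℂ] Completion H)‖⁻¹ := by
      rw [hu]
      have heq : (algebraMap ℂ (Completion H →L[ℂ] Completion H) lam - a)
          - (algebraMap ℂ (Completion H →L[ℂ] Completion H) μ - a)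
          = algebraMap ℂ (Completion H →L[ℂ] Completion H) (lam - μ) := by
        rw [map_sub]; abel
      have heq2 : lam - μ = -((δ:ℝ):ℂ) * lam := by rw [hμdef]; push_cast; ring
      rw [heq, norm_algebraMap', heq2, norm_mul, norm_neg, Complex.norm_real,
        Real.norm_eq_abs, abs_of_pos hδ0, hlamnorm]
      exact h'
    have hIsU : IsUnit (algebraMap ℂ (Completion H →L[ℂ] Completion H) lam - a) :=
      ⟨u.ofNearby _ hnear, rfl⟩
    exact (spectrum.mem_iff.mp hmem) hIsU
  have hBnorm : (δ * c)⁻¹ ≤ ‖(↑u⁻¹ : Completion H →L[ℂ] Completion H)‖ :=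
    inv_le_of_inv_le₀ hinv_pos hlow
  set B := (↑u⁻¹ : Completion H →L[ℂ] Completion H) with hBdef
  have hδc : 0 < δ * c := by positivity
  obtain ⟨yh, hyh⟩ : ∃ y, (2 * (δ * c))⁻¹ * ‖y‖ < ‖B y‖ := by
    by_contra h'
    push_neg at h'
    have hle := B.opNorm_le_bound (by positivity) fun y => h' y
    have hlt : (2 * (δ * c))⁻¹ < (δ * c)⁻¹ := by
      rw [inv_lt_inv₀ (by positivity) (by positivity)]
      linarith
    linarith
  set xh := B yh with hxhdef
  have hxhpos : 0 < ‖xh‖ := lt_of_le_of_lt (by positivity) hyh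
  have hyhle : ‖yh‖ ≤ 2 * (δ * c) * ‖xh‖ := by
    have h7 := le_of_lt hyh
    have h8 : (0:ℝ) < 2 * (δ * c) := by positivity
    calc ‖yh‖ = 2 * (δ * c) * ((2 * (δ * c))⁻¹ * ‖yh‖) := by field_simp
      _ ≤ 2 * (δ * c) * ‖B yh‖ := mul_le_mul_of_nonneg_left h7 (le_of_lt h8)
      _ = 2 * (δ * c) * ‖xh‖ := rfl
  have happly : μ • xh - a xh = yh := by
    have h1 : ((↑u : Completion H →L[ℂ] Completion H) * ↑u⁻¹) = 1 := u.mul_inv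
    have h2 := congrArg (fun f : Completion H →L[ℂ] Completion H => f yh) h1
    simp only [ContinuousLinearMap.mul_apply, ContinuousLinearMap.one_apply] at h2
    rw [hu] at h2
    have halg : (algebraMap ℂ (Completion H →L[ℂ] Completion H) μ) (B yh) = μ • (B yh) := by
      simp [Algebra.algebraMap_eq_smul_one]
    rw [ContinuousLinearMap.sub_apply, halg] at h2
    exact h2
  have h2' : ‖a xh - μ • xh‖ ≤ 2 * (δ * c) * ‖xh‖ := by
    rw [← norm_neg, neg_sub, happly]; exact hyhle
  have hμlam : ‖μ - lam‖ = δ * c := by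
    have heq2 : μ - lam = ((δ:ℝ):ℂ) * lam := by rw [hμdef]; push_cast; ring
    rw [heq2, norm_mul, Complex.norm_real, Real.norm_eq_abs, abs_of_pos hδ0, hlamnorm]
  have h3' : ‖a xh - lam • xh‖ ≤ 3 * (δ * c) * ‖xh‖ := by
    have heq3 : a xh - lam • xh = (a xh - μ • xh) + (μ - lam) • xh := by
      rw [sub_smul]; abel
    rw [heq3]
    calc ‖(a xh - μ • xh) + (μ - lam) • xh‖
        ≤ ‖a xh - μ • xh‖ + ‖(μ - lam) • xh‖ := norm_add_le _ _
      _ ≤ 2 * (δ * c) * ‖xh‖ + δ * c * ‖xh‖ := by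
          rw [norm_smul, hμlam]; linarith
      _ = 3 * (δ * c) * ‖xh‖ := by ring
  set xh' : Completion H := (‖xh‖⁻¹ : ℝ) • xh with hxh'def
  have hxh'1 : ‖xh'‖ = 1 := by
    rw [hxh'def, norm_smul, Real.norm_eq_abs, abs_of_pos (by positivity)]
    field_simp
  have h3'' : ‖a xh' - lam • xh'‖ ≤ 3 * (δ * c) := by
    have heq4 : a xh' - lam • xh' = (‖xh‖⁻¹ : ℝ) • (a xh - lam • xh) := by
      rw [hxh'def, a.map_smul_of_tower, smul_sub, smul_comm]
    rw [heq4, norm_smul, Real.norm_eq_abs, abs_of_pos (by positivity)]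
    rw [inv_mul_le_iff₀ hxhpos]
    calc ‖a xh - lam • xh‖ ≤ 3 * (δ * c) * ‖xh‖ := h3'
      _ = ‖xh‖ * (3 * (δ * c)) := by ring
  obtain ⟨z, hz⟩ := hdense.exists_dist_lt xh' hδ0
  rw [dist_comm, dist_eq_norm] at hz
  have hznorm : 1 - δ ≤ ‖z‖ ∧ ‖z‖ ≤ 1 + δ := by
    have h9 : |‖ι z‖ - ‖xh'‖| ≤ ‖ι z - xh'‖ := abs_norm_sub_norm_le _ _
    rw [hιnorm, hxh'1, abs_le] at h9
    constructor <;> [linarith [hz, h9.1]; linarith [hz, h9.2]]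
  have hz0 : 0 < ‖z‖ := by linarith [hznorm.1]
  have hTz : ‖T z - lam • z‖ ≤ 5 * (δ * c) := by
    have e0 : ι (T z - lam • z) = a (ι z) - lam • (ι z) := by
      rw [map_sub, map_smul, ha]
    have e1 : ‖T z - lam • z‖ = ‖a (ι z) - lam • (ι z)‖ := by
      rw [← hιnorm, e0]
    have e2 : a (ι z) - lam • (ι z)
        = (a xh' - lam • xh') + (a (ι z - xh') - lam • (ι z - xh')) := by
      rw [map_sub, smul_sub]; abel
    have e3 : ‖a (ι z - xh')‖ ≤ c * δ := by
      calc ‖a (ι z - xh')‖ ≤ ‖a‖ * ‖ι z - xh'‖ := a.le_opNorm _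
        _ ≤ c * δ := by rw [hna]; exact mul_le_mul_of_nonneg_left (le_of_lt hz) (norm_nonneg T)
    have e4 : ‖lam • (ι z - xh')‖ ≤ c * δ := by
      rw [norm_smul, hlamnorm]
      exact mul_le_mul_of_nonneg_left (le_of_lt hz) (norm_nonneg T)
    rw [e1, e2]
    calc ‖(a xh' - lam • xh') + (a (ι z - xh') - lam • (ι z - xh'))‖
        ≤ ‖a xh' - lam • xh'‖ + ‖a (ι z - xh') - lam • (ι z - xh')‖ := norm_add_le _ _
      _ ≤ 3 * (δ * c) + (‖a (ι z - xh')‖ + ‖lam • (ι z - xh')‖) := by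
          have := norm_sub_le (a (ι z - xh')) (lam • (ι z - xh'))
          linarith
      _ ≤ 3 * (δ * c) + (c * δ + c * δ) := by linarith
      _ = 5 * (δ * c) := by ring
  refine ⟨lam, (‖z‖⁻¹ : ℝ) • z, ?_, hlamnorm, ?_⟩
  · rw [norm_smul, Real.norm_eq_abs, abs_of_pos (by positivity)]
    field_simp
  · have e5 : T ((‖z‖⁻¹ : ℝ) • z) - lam • ((‖z‖⁻¹ : ℝ) • z)
        = (‖z‖⁻¹ : ℝ) • (T z - lam • z) := by
      rw [T.map_smul_of_tower, smul_sub, smul_comm]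
    rw [e5, norm_smul, Real.norm_eq_abs, abs_of_pos (by positivity)]
    have hzinv : ‖z‖⁻¹ ≤ 2 := by
      have h12 : (1:ℝ)/2 ≤ ‖z‖ := by linarith [hznorm.1]
      calc ‖z‖⁻¹ ≤ ((1:ℝ)/2)⁻¹ := by
            apply inv_anti₀ (by norm_num) h12
        _ = 2 := by norm_num
    calc ‖z‖⁻¹ * ‖T z - lam • z‖ ≤ 2 * (5 * (δ * c)) := by
          have := norm_nonneg (T z - lam • z)
          nlinarith
      _ = 10 * δ * c := by ring
      _ ≤ ε := hδε



end CompletionAux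
end NumRadAux

/-- If `T` is normal, then `w(T) = ‖T‖`. -/
theorem numRadius_eq_norm_of_normal (T Tadj : H →L[ℂ] H) (hT : ∀ x y : H, (inner A (T x) y : A) = inner A x (Tadj y))
    (hnormal : Tadj ∘L T = T ∘L Tadj) :
    numRadius A T = ‖T‖ := by
  classical
  have hub : ∀ r ∈ {r : ℝ | ∃ x : H, ‖x‖ = 1 ∧ r = ‖(inner A (T x) x : A)‖}, r ≤ ‖T‖ := by
    rintro r ⟨x, hx1, rfl⟩
    calc ‖(inner A (T x) x : A)‖ ≤ ‖T x‖ * ‖x‖ := CStarModule.norm_inner_le H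
      _ ≤ ‖T‖ * ‖x‖ * ‖x‖ := by
          have := T.le_opNorm x
          nlinarith [norm_nonneg x, norm_nonneg (T x), norm_nonneg T]
      _ = ‖T‖ := by rw [hx1]; ring
  have hnonneg : ∀ r ∈ {r : ℝ | ∃ x : H, ‖x‖ = 1 ∧ r = ‖(inner A (T x) x : A)‖}, 0 ≤ r := by
    rintro r ⟨x, hx1, rfl⟩
    exact norm_nonneg _
  show sSup {r : ℝ | ∃ x : H, ‖x‖ = 1 ∧ r = ‖(inner A (T x) x : A)‖} = ‖T‖
  rcases eq_or_lt_of_le (norm_nonneg T) with h0 | h0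
  · rw [← h0]
    refine le_antisymm (Real.sSup_le (fun r hr => (hub r hr).trans h0.symm.le) le_rfl) ?_
    exact Real.sSup_nonneg hnonneg
  · refine le_antisymm (Real.sSup_le hub (norm_nonneg T)) ?_
    refine le_of_forall_pos_le_add fun ε hε => ?_
    obtain ⟨lam, x, hx1, hlam, happrox⟩ := NumRadAux.exists_approx_eigenvector T
      (NumRadAux.norm_pow_two_pow T Tadj hT hnormal) h0 hε
    have hxS : ‖(inner A (T x) x : A)‖ ∈
        {r : ℝ | ∃ x : H, ‖x‖ = 1 ∧ r = ‖(inner A (T x) x : A)‖} := ⟨x, hx1, rfl⟩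
    have hbdd : BddAbove {r : ℝ | ∃ x : H, ‖x‖ = 1 ∧ r = ‖(inner A (T x) x : A)‖} := ⟨‖T‖, hub⟩
    have hle := le_csSup hbdd hxS
    have key : ‖T‖ - ε ≤ ‖(inner A (T x) x : A)‖ := by
      have e1 : (inner A (T x) x : A) = inner A (T x - lam • x) x + inner A (lam • x) x := by
        rw [← CStarModule.inner_add_left, sub_add_cancel]
      have e2 : ‖(inner A (lam • x) x : A)‖ = ‖T‖ := by
        rw [CStarModule.inner_smul_left_complex, norm_smul, norm_star, hlam,
          ← CStarModule.norm_sq_eq, hx1]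
        ring
      have e3 : ‖(inner A (T x - lam • x) x : A)‖ ≤ ε := by
        calc ‖(inner A (T x - lam • x) x : A)‖ ≤ ‖T x - lam • x‖ * ‖x‖ :=
              CStarModule.norm_inner_le H
          _ ≤ ε * 1 := by rw [hx1]; nlinarith [norm_nonneg (T x - lam • x)]
          _ = ε := mul_one ε
      have e5 := norm_sub_le
        ((inner A (T x - lam • x) x + inner A (lam • x) x : A)) ((inner A (T x - lam • x) x : A))
      have e6 : (inner A (T x - lam • x) x + inner A (lam • x) x : A)
          - inner A (T x - lam • x) x = inner A (lam • x) x := by abel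
      rw [e6, ← e1, e2] at e5
      linarith
    linarith
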